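/- arXiv:1703.00345 — 2 statements merged into one kernel-verified Lean document; each statement's English description precedes it below -/
import Mathlib

section
/- (Local multiplier theorem) Let D be a regular (v,k,λ,μ)-PDS in a finite abelian group G, and assume Δ = (λ−μ)² + 4(k−μ) is a perfect square. Then for every g ∈ G and every integer s coprime with the order of g, one has g ∈ D if and only if g^s ∈ D. -/
/-- The number of representations of `g` as `a * b⁻¹` with `a, b ∈ D`. -/
def diffReps {G : Type*} [Group G] [DecidableEq G] (D : Finset G) (g : G) : ℕ :=
  ((D ×ˢ D).filter (fun p => p.1 * p.2⁻¹ = g)).card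

/-- `D` is a `(v, k, λ, μ)`-partial difference set in the finite group `G`. -/
def IsPDS {G : Type*} [Group G] [Fintype G] [DecidableEq G]
    (D : Finset G) (v k l m : ℕ) : Prop :=
  Fintype.card G = v ∧ D.card = k ∧
  ∀ g : G, g ≠ 1 →
    (g ∈ D → diffReps D g = l) ∧ (g ∉ D → diffReps D g = m)

/-- `D` is regular: it does not contain the identity and is closed under inverses. -/
def IsRegularPDS {G : Type*} [Group G] (D : Finset G) : Prop :=
  (1 : G) ∉ D ∧ ∀ d : G, d ∈ D ↔ d⁻¹ ∈ D

/-- A regular PDS `D` is trivial if `D ∪ {e}` or `G \ D` is a subgroup of `G`. -/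
def IsTrivialPDS {G : Type*} [Group G] (D : Finset G) : Prop :=
  (∃ H : Subgroup G, (H : Set G) = insert (1 : G) ↑D) ∨
  (∃ H : Subgroup G, (H : Set G) = (↑D : Set G)ᶜ)

/-!
Work with characters of `G` valued in the cyclotomic field `L = ℚ(ζₙ)`, `n = exp G`. For a
nontrivial character `χ` the PDS equations give `χ(D)² = (k - μ) + (λ - μ) χ(D)`, whose roots are
integers because `Δ` is a square, so every `χ(D)` is rational. Choose `t` coprime to `n` with
`g^t = g^s`; the automorphism `ζ ↦ ζ^t` of `L` then fixes each `χ(D)` and sends `χ(g⁻¹)` to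
`χ(g^{-t})`. Applying it to Fourier inversion `|G| 1_D(g) = ∑_χ χ(D) χ(g⁻¹)` gives
`1_D(g) = 1_D(g^t)`.
-/

open Finset

section DiffReps

variable {G : Type*} [Group G] [DecidableEq G]

theorem diffReps_one (D : Finset G) : diffReps D 1 = D.card := by
  simp_rw [diffReps, mul_inv_eq_one, ← diag_eq_filter, diag_card]

theorem IsPDS.diffReps_eq [Fintype G] {D : Finset G} {v k l m : ℕ} (hD : IsPDS D v k l m)
    (h1 : (1 : G) ∉ D) (g : G) :
    (diffReps D g : ℤ) =
      m + (if g = 1 then (k : ℤ) - m else 0) + (if g ∈ D then (l : ℤ) - m else 0) := by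
  obtain ⟨-, hk, hlm⟩ := hD
  rcases eq_or_ne g 1 with rfl | hg
  · simp [diffReps_one, hk, h1]
  · by_cases hgD : g ∈ D
    · simp [hg, hgD, (hlm g hg).1 hgD]
    · simp [hg, hgD, (hlm g hg).2 hgD]

end DiffReps

theorem exists_intCast_eq_of_sq_eq_add_mul {R : Type*} [CommRing R] [IsDomain R] {x : R}
    {a b : ℤ} (hx : x ^ 2 = b + a * x) (hdisc : IsSquare (a ^ 2 + 4 * b)) :
    ∃ z : ℤ, x = z := by
  obtain ⟨u, hu⟩ := hdisc
  obtain ⟨c, hc⟩ : Even (u + a) := by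
    have h : Even (a ^ 2 + 4 * b) ↔ Even (u * u) := by rw [hu]
    simpa [Int.even_add, Int.even_mul, Int.even_pow, show Even (4 : ℤ) by decide, iff_comm]
      using h
  -- the roots of `X ^ 2 - a X - b` are `(a ± u) / 2`, that is `c` and `a - c`
  have hprod : c * (a - c) = -b := by
    have : 4 * (c * (a - c) + b) = 0 := by linear_combination hu + (u + 2 * c - a) * hc
    linarith
  have hroots : (x - c) * (x - (a - c : ℤ)) = 0 := by
    have hprodR : ((c * (a - c) : ℤ) : R) = ((-b : ℤ) : R) := by rw [hprod]
    push_cast at hprodR ⊢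
    linear_combination hx + hprodR
  rcases mul_eq_zero.1 hroots with h | h
  · exact ⟨c, sub_eq_zero.1 h⟩
  · exact ⟨a - c, sub_eq_zero.1 h⟩

def charSum {G R : Type*} [Monoid G] [CommRing R] (D : Finset G) (χ : G →* Rˣ) : R :=
  ∑ d ∈ D, (χ d : R)

section PDSCharSum

variable {G R : Type*} [Group G] [Fintype G] [DecidableEq G] [CommRing R]

theorem charSum_sq_eq_sum_diffReps {D : Finset G} (hinv : ∀ d : G, d ∈ D ↔ d⁻¹ ∈ D)
    (χ : G →* Rˣ) :
    charSum D χ ^ 2 = ∑ g : G, (diffReps D g : R) * (χ g : R) := by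
  have hD : charSum D χ = ∑ d ∈ D, (χ d⁻¹ : R) :=
    (sum_nbij' (·⁻¹) (·⁻¹) (fun d hd => (hinv d).1 hd) (fun d hd => (hinv d).1 hd)
      (fun d _ => inv_inv d) (fun d _ => inv_inv d) fun _ _ => rfl).symm
  calc charSum D χ ^ 2 = ∑ p ∈ D ×ˢ D, (χ (p.1 * p.2⁻¹) : R) := by
        rw [sq]
        nth_rw 2 [hD]
        simp [charSum, sum_mul_sum, sum_product]
    _ = ∑ g : G, ∑ p ∈ D ×ˢ D with p.1 * p.2⁻¹ = g, (χ g : R) :=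
        (sum_fiberwise' _ (fun p : G × G => p.1 * p.2⁻¹) fun g => (χ g : R)).symm
    _ = ∑ g : G, (diffReps D g : R) * (χ g : R) := by
        simp [diffReps, sum_const, nsmul_eq_mul]

theorem IsPDS.charSum_sq [IsDomain R] {D : Finset G} {v k l m : ℕ} (hD : IsPDS D v k l m)
    (hreg : IsRegularPDS D) {χ : G →* Rˣ} (hχ : χ ≠ 1) :
    charSum D χ ^ 2 = ((k : R) - m) + ((l : R) - m) * charSum D χ := by
  have hχ' : (Units.coeHom R).comp χ ≠ 1 := fun h =>
    hχ (MonoidHom.ext fun g => Units.ext (DFunLike.congr_fun h g))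
  have hsum : ∑ g : G, (χ g : R) = 0 := sum_hom_units_eq_zero _ hχ'
  have hrep (g : G) : (diffReps D g : R) =
      m + (if g = 1 then (k : R) - m else 0) + (if g ∈ D then (l : R) - m else 0) := by
    exact_mod_cast congrArg (Int.cast : ℤ → R) (hD.diffReps_eq hreg.1 g)
  simp_rw [charSum_sq_eq_sum_diffReps hreg.2, hrep, add_mul, sum_add_distrib, ← mul_sum,
    ite_mul, zero_mul, sum_ite_eq', sum_ite_mem, univ_inter, mem_univ, if_true, hsum, map_one,
    Units.val_one, charSum, mul_sum]
  ring

theorem IsPDS.exists_charSum_eq_intCast [IsDomain R] {D : Finset G} {v k l m : ℕ}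
    (hD : IsPDS D v k l m) (hreg : IsRegularPDS D)
    (hsq : IsSquare (((l : ℤ) - m) ^ 2 + 4 * ((k : ℤ) - m))) (χ : G →* Rˣ) :
    ∃ z : ℤ, charSum D χ = z := by
  rcases eq_or_ne χ 1 with rfl | hχ
  · exact ⟨k, by simp [charSum, hD.2.1]⟩
  · refine exists_intCast_eq_of_sq_eq_add_mul ?_ hsq
    rw [hD.charSum_sq hreg hχ]
    push_cast
    ring

end PDSCharSum

section Characters

variable {G R : Type*} [CommGroup G] [Fintype G] [CommRing R] [IsDomain R]
  [HasEnoughRootsOfUnity R (Monoid.exponent G)] [Fintype (G →* Rˣ)]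

theorem sum_monoidHom_apply_eq_ite [DecidableEq G] (g : G) :
    ∑ χ : G →* Rˣ, (χ g : R) = if g = 1 then (Fintype.card G : R) else 0 := by
  have hcard : Fintype.card (G →* Rˣ) = Fintype.card G := by
    simpa only [Nat.card_eq_fintype_card] using
      CommGroup.card_monoidHom_of_hasEnoughRootsOfUnity G R
  have hev : (Units.coeHom R).comp (MonoidHom.eval g) = 1 ↔ g = 1 := by
    rw [← CommGroup.forall_apply_eq_apply_iff G (M := R)]
    simp [MonoidHom.ext_iff, Units.val_eq_one]
  classical
  simpa [hev, hcard] using sum_hom_units ((Units.coeHom R).comp (MonoidHom.eval g))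

theorem sum_charSum_mul_apply_inv [DecidableEq G] (D : Finset G) (x : G) :
    ∑ χ : G →* Rˣ, charSum D χ * (χ x⁻¹ : R) =
      if x ∈ D then (Fintype.card G : R) else 0 := by
  simp_rw [charSum, sum_mul, ← Units.val_mul, ← map_mul]
  rw [sum_comm]
  simp_rw [sum_monoidHom_apply_eq_ite, mul_inv_eq_one, sum_ite_eq']

end Characters

theorem pow_mem_iff_of_forall_charSum_fixed {G K : Type*} [CommGroup G] [Fintype G]
    [DecidableEq G] [CommRing K] [IsDomain K] [CharZero K]
    [HasEnoughRootsOfUnity K (Monoid.exponent G)]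
    [Fintype (G →* Kˣ)] {D : Finset G} {σ : K →+* K} {t : ℕ}
    (hσ : ∀ ξ : K, ξ ^ Monoid.exponent G = 1 → σ ξ = ξ ^ t)
    (hfix : ∀ χ : G →* Kˣ, σ (charSum D χ) = charSum D χ) (g : G) :
    g ^ t ∈ D ↔ g ∈ D := by
  have hχ (χ : G →* Kˣ) (x : G) : σ (χ x : K) = (χ (x ^ t) : K) := by
    rw [hσ _ (by rw [← Units.val_pow_eq_pow_val, ← map_pow, Monoid.pow_exponent_eq_one,
      map_one, Units.val_one]), map_pow, Units.val_pow_eq_pow_val]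
  have key : (if g ^ t ∈ D then (Fintype.card G : K) else 0) =
      if g ∈ D then (Fintype.card G : K) else 0 :=
    calc _ = ∑ χ : G →* Kˣ, charSum D χ * (χ (g ^ t)⁻¹ : K) :=
          (sum_charSum_mul_apply_inv D _).symm
      _ = σ (∑ χ : G →* Kˣ, charSum D χ * (χ g⁻¹ : K)) := by
          simp_rw [map_sum, map_mul, hfix, hχ, inv_pow]
      _ = σ (if g ∈ D then (Fintype.card G : K) else 0) := by
          rw [sum_charSum_mul_apply_inv]
      _ = _ := by split_ifs <;> simp
  have hcard : (Fintype.card G : K) ≠ 0 := Nat.cast_ne_zero.2 Fintype.card_ne_zero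
  split_ifs at key with h₁ h₂ h₂
  exacts [iff_of_true h₁ h₂, (hcard key).elim, (hcard key.symm).elim, iff_of_false h₁ h₂]

theorem exists_pow_eq_zpow_coprime_exponent {G : Type*} [Group G] [Finite G] (g : G) {s : ℤ}
    (hs : IsCoprime s (orderOf g)) :
    ∃ t : ℕ, t.Coprime (Monoid.exponent G) ∧ g ^ t = g ^ s := by
  obtain ⟨u, hu⟩ := ZMod.unitsMap_surjective (Monoid.order_dvd_exponent g)
    (ZMod.unitOfIsCoprime s hs)
  refine ⟨(u : ZMod (Monoid.exponent G)).val, ZMod.val_coe_unit_coprime u, ?_⟩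
  rw [← zpow_natCast, zpow_eq_zpow_iff_modEq, ← ZMod.intCast_eq_intCast_iff, Int.cast_natCast,
    ZMod.natCast_val]
  simpa [ZMod.unitsMap_val] using congrArg Units.val hu

namespace IsCyclotomicExtension

variable (n : ℕ) [NeZero n] (L : Type*) [Field L]

theorem hasEnoughRootsOfUnity (K : Type*) [CommRing K] [Algebra K L]
    [IsCyclotomicExtension {n} K L] : HasEnoughRootsOfUnity L n :=
  ⟨⟨_, zeta_spec n K L⟩, rootsOfUnity.isCyclic L n⟩

theorem exists_algEquiv_apply_eq_pow [Algebra ℚ L] [IsCyclotomicExtension {n} ℚ L] {t : ℕ}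
    (ht : t.Coprime n) : ∃ σ : L ≃ₐ[ℚ] L, ∀ ξ : L, ξ ^ n = 1 → σ ξ = ξ ^ t := by
  have hζ := zeta_spec n ℚ L
  have hirr := Polynomial.cyclotomic.irreducible_rat (NeZero.pos n)
  refine ⟨fromZetaAut (hζ.pow_of_coprime t ht) hirr, fun ξ hξ => ?_⟩
  obtain ⟨i, -, rfl⟩ := hζ.eq_pow_of_pow_eq_one hξ
  rw [map_pow, fromZetaAut_spec, ← pow_mul, ← pow_mul, mul_comm]

end IsCyclotomicExtension

/-- The local multiplier theorem: if `D` is a regular `(v,k,λ,μ)`-PDS in a finite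
abelian group and `Δ = (λ-μ)² + 4(k-μ)` is a perfect square, then `g ∈ D` iff
`g^s ∈ D` for every integer `s` coprime with the order of `g`. -/
theorem local_multiplier_theorem (G : Type*) [CommGroup G] [Fintype G] [DecidableEq G]
    (D : Finset G) (v k l m : ℕ) (hD : IsPDS D v k l m) (hreg : IsRegularPDS D)
    (hsq : IsSquare (((l : ℤ) - m) ^ 2 + 4 * ((k : ℤ) - m))) :
    ∀ (g : G) (s : ℤ), IsCoprime s (orderOf g : ℤ) → (g ∈ D ↔ g ^ s ∈ D) := by
  intro g s hs
  obtain ⟨t, ht, hgt⟩ := exists_pow_eq_zpow_coprime_exponent g hs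
  let L := CyclotomicField (Monoid.exponent G) ℚ
  -- given explicitly: instance search fails to unify the two `Algebra ℚ L` instances involved
  have : IsCyclotomicExtension {Monoid.exponent G} ℚ L :=
    CyclotomicField.isCyclotomicExtension _ _
  have := IsCyclotomicExtension.hasEnoughRootsOfUnity (Monoid.exponent G) L ℚ
  let _ := Fintype.ofFinite (G →* Lˣ)
  obtain ⟨σ, hσ⟩ := IsCyclotomicExtension.exists_algEquiv_apply_eq_pow _ L ht
  refine hgt ▸ (pow_mem_iff_of_forall_charSum_fixed (σ := σ.toRingHom) hσ ?_ g).symm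
  intro χ
  obtain ⟨z, hz⟩ := hD.exists_charSum_eq_intCast hreg hsq χ
  rw [hz]
  exact map_intCast _ z
end

section
/- Let D be a regular (216, 40, 4, 8)-PDS in the group G = (ℤ/2ℤ)³ × (ℤ/3ℤ)³ containing exactly 4 elements of order 2. For each element g ∈ G of order 3 let B_g denote the number of d ∈ D with d⁴ = g. Then the sum of B_g over all 26 elements g of order 3 equals 36, and the sum of B_g·(B_g − 1) over all such g equals 28. -/
/-- The group `(ℤ/2ℤ)³ × (ℤ/3ℤ)³`, written multiplicatively. -/
abbrev G216 : Type := Multiplicative ((Fin 3 → ZMod 2) × (Fin 3 → ZMod 3))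

/-! Since `G216` has exponent 6, `d⁴ = d⁻²` has order 3 exactly when `d² ≠ 1`, and `a⁴ = b⁴`
exactly when `a² = b²`. So the first sum counts the `40 - 4` elements of `D` that are not
involutions, and the second counts the ordered pairs `a ≠ b` in `D` with `a² = b² ≠ 1`.
The pairs with `a ≠ b`, `a² = b²` are those with `a b⁻¹` an involution; each of the 7 involutions
of `G216` arises `λ = 4` times if it lies in `D` and `μ = 8` times otherwise, giving
`4·4 + 3·8 = 40` pairs, of which `4·3 = 12` consist of two involutions of `D`. -/

open Finset

theorem sum_card_fiber_mul_sub_one {α β : Type*} [DecidableEq α] [DecidableEq β]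
    (s : Finset α) (t : Finset β) (f : α → β) :
    ∑ b ∈ t, #{a ∈ s | f a = b} * (#{a ∈ s | f a = b} - 1) =
      #{p ∈ s.offDiag | f p.1 = f p.2 ∧ f p.1 ∈ t} := by
  rw [← filter_filter, ← sum_card_fiberwise_eq_card_filter _ t (fun p : α × α => f p.1)]
  refine sum_congr rfl fun b _ => ?_
  rw [Nat.mul_sub_one, ← offDiag_card]
  congr 1
  ext p
  simp only [mem_offDiag, mem_filter]
  grind

theorem orderOf_eq_two_iff_of_ne_one {M : Type*} [Monoid M] {g : M} (hg : g ≠ 1) :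
    orderOf g = 2 ↔ g ^ 2 = 1 := by
  rw [orderOf_eq_prime_iff, and_iff_left hg]

theorem orderOf_mul_inv_eq_two_iff {G : Type*} [CommGroup G] (a b : G) :
    orderOf (a * b⁻¹) = 2 ↔ a ≠ b ∧ a ^ 2 = b ^ 2 := by
  rw [orderOf_eq_prime_iff, mul_pow, inv_pow, mul_inv_eq_one, Ne, mul_inv_eq_one, and_comm]

theorem IsPDS.card_filter_mul_inv {G : Type*} [Group G] [Fintype G] [DecidableEq G]
    {D : Finset G} {v k l m : ℕ} (hD : IsPDS D v k l m) (P : G → Prop) [DecidablePred P]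
    (hP : ¬ P 1) :
    #{p ∈ D ×ˢ D | P (p.1 * p.2⁻¹)} =
      l * #{d ∈ D | P d} + m * (#{g | P g} - #{d ∈ D | P d}) := by
  -- the fibres of `p ↦ p.1 * p.2⁻¹` are, by definition, the sets counted by `diffReps D`
  have hfiber := sum_card_fiberwise_eq_card_filter (D ×ˢ D) {g | P g} (fun p => p.1 * p.2⁻¹)
  simp only [mem_filter, mem_univ, true_and] at hfiber
  have hne : ∀ g, P g → g ≠ 1 := fun g hg h1 => hP (h1 ▸ hg)
  obtain ⟨-, -, hlm⟩ := hD
  have hin : ({g | P g ∧ g ∈ D} : Finset G) = {d ∈ D | P d} := by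
    ext g
    simp [and_comm]
  have hout : ({g | P g ∧ g ∉ D} : Finset G) = ({g | P g} : Finset G) \ {d ∈ D | P d} := by
    ext g
    simp only [mem_filter, mem_univ, true_and, mem_sdiff]
    tauto
  rw [← hfiber, ← sum_filter_add_sum_filter_not _ (· ∈ D), filter_filter, filter_filter,
    sum_const_nat (m := l), sum_const_nat (m := m), hin, hout,
    card_sdiff_of_subset (filter_subset_filter P (subset_univ D)), mul_comm, mul_comm _ m]
  · simp only [mem_filter, mem_univ, true_and, and_imp]
    exact fun g hg hgD => (hlm g (hne g hg)).2 hgD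
  · simp only [mem_filter, mem_univ, true_and, and_imp]
    exact fun g hg hgD => (hlm g (hne g hg)).1 hgD

section ExponentSix

theorem pow_four_eq_one_iff_of_pow_six {M : Type*} [Monoid M] (hexp : ∀ g : M, g ^ 6 = 1)
    (g : M) : g ^ 4 = 1 ↔ g ^ 2 = 1 := by
  refine ⟨fun h => ?_, fun h => by rw [show 4 = 2 * 2 from rfl, pow_mul, h, one_pow]⟩
  rw [← hexp g, show 6 = 2 + 4 from rfl, pow_add, h, mul_one]

theorem orderOf_pow_four_eq_three_iff_of_pow_six {M : Type*} [Monoid M]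
    (hexp : ∀ g : M, g ^ 6 = 1) (g : M) : orderOf (g ^ 4) = 3 ↔ g ^ 2 ≠ 1 := by
  rw [orderOf_eq_prime_iff, ← pow_mul, show 4 * 3 = 6 * 2 from rfl, pow_mul, hexp, one_pow,
    Ne, pow_four_eq_one_iff_of_pow_six hexp]
  simp

variable {G : Type*} [CommGroup G] {D : Finset G}

theorem pow_four_eq_pow_four_iff_of_pow_six (hexp : ∀ g : G, g ^ 6 = 1) (a b : G) :
    a ^ 4 = b ^ 4 ↔ a ^ 2 = b ^ 2 := by
  rw [← mul_inv_eq_one, ← mul_inv_eq_one (a := a ^ 2), ← inv_pow, ← inv_pow, ← mul_pow,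
    ← mul_pow, pow_four_eq_one_iff_of_pow_six hexp]

theorem card_orderOf_pow_four_eq_three_add_card_orderOf_eq_two
    (hexp : ∀ g : G, g ^ 6 = 1) (hD : (1 : G) ∉ D) :
    #{d ∈ D | orderOf (d ^ 4) = 3} + #{d ∈ D | orderOf d = 2} = #D := by
  rw [add_comm, ← card_filter_add_card_filter_not (s := D) (p := fun d => orderOf d = 2)]
  congr 2
  refine filter_congr fun d hd => ?_
  rw [orderOf_pow_four_eq_three_iff_of_pow_six hexp,
    orderOf_eq_two_iff_of_ne_one (ne_of_mem_of_not_mem hd hD)]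

theorem card_offDiag_pow_four_add_mul_eq_card_orderOf_mul_inv_eq_two [DecidableEq G]
    (hexp : ∀ g : G, g ^ 6 = 1) (hD : (1 : G) ∉ D) :
    #{p ∈ D.offDiag | p.1 ^ 4 = p.2 ^ 4 ∧ orderOf (p.1 ^ 4) = 3} +
        #{d ∈ D | orderOf d = 2} * (#{d ∈ D | orderOf d = 2} - 1) =
      #{p ∈ D ×ˢ D | orderOf (p.1 * p.2⁻¹) = 2} := by
  have hsq : ∀ d ∈ D, orderOf d = 2 ↔ d ^ 2 = 1 := fun d hd =>
    orderOf_eq_two_iff_of_ne_one (ne_of_mem_of_not_mem hd hD)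
  set Q := {p ∈ D ×ˢ D | orderOf (p.1 * p.2⁻¹) = 2}
  have hgood : {p ∈ D.offDiag | p.1 ^ 4 = p.2 ^ 4 ∧ orderOf (p.1 ^ 4) = 3} =
      {p ∈ Q | ¬ p.1 ^ 2 = 1} := by
    ext p
    simp only [Q, mem_filter, mem_offDiag, mem_product, orderOf_mul_inv_eq_two_iff,
      pow_four_eq_pow_four_iff_of_pow_six hexp, orderOf_pow_four_eq_three_iff_of_pow_six hexp]
    tauto
  have hbad : {d ∈ D | orderOf d = 2}.offDiag = {p ∈ Q | p.1 ^ 2 = 1} := by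
    ext p
    simp only [Q, mem_filter, mem_offDiag, mem_product, orderOf_mul_inv_eq_two_iff]
    constructor
    · rintro ⟨⟨h1, hd1⟩, ⟨h2, hd2⟩, hne⟩
      have hsq1 := (hsq _ h1).1 hd1
      exact ⟨⟨⟨h1, h2⟩, hne, hsq1.trans ((hsq _ h2).1 hd2).symm⟩, hsq1⟩
    · rintro ⟨⟨⟨h1, h2⟩, hne, h12⟩, hp1⟩
      exact ⟨⟨h1, (hsq _ h1).2 hp1⟩, ⟨h2, (hsq _ h2).2 (h12 ▸ hp1)⟩, hne⟩
  rw [Nat.mul_sub_one, ← offDiag_card, hgood, hbad, add_comm]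
  exact card_filter_add_card_filter_not _

end ExponentSix

theorem G216.pow_six_eq_one (g : G216) : g ^ 6 = 1 := by
  apply Multiplicative.toAdd.injective
  ext i
  · rw [toAdd_pow, toAdd_one, Prod.smul_fst, Pi.smul_apply, nsmul_eq_mul,
      show ((6 : ℕ) : ZMod 2) = 0 from rfl, zero_mul]
    rfl
  · rw [toAdd_pow, toAdd_one, Prod.smul_snd, Pi.smul_apply, nsmul_eq_mul,
      show ((6 : ℕ) : ZMod 3) = 0 from rfl, zero_mul]
    rfl

theorem G216.card_orderOf_eq_two : #{g : G216 | orderOf g = 2} = 7 := by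
  simp only [orderOf_eq_prime_iff]
  decide

/-- For a regular `(216,40,4,8)`-PDS `D` in `(ℤ/2ℤ)³ × (ℤ/3ℤ)³` with exactly 4
elements of order 2, writing `B g = #{d ∈ D | d⁴ = g}` for each element `g` of
order 3, one has `∑ B g = 36` and `∑ B g (B g - 1) = 28`. -/
theorem fiber_count_equations_four_involutions (D : Finset G216)
    (hD : IsPDS D 216 40 4 8) (hreg : IsRegularPDS D)
    (h2 : (D.filter (fun d => orderOf d = 2)).card = 4) :
    (∑ g ∈ Finset.univ.filter (fun g : G216 => orderOf g = 3),
        (D.filter (fun d => d ^ 4 = g)).card) = 36 ∧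
    (∑ g ∈ Finset.univ.filter (fun g : G216 => orderOf g = 3),
        (D.filter (fun d => d ^ 4 = g)).card *
          ((D.filter (fun d => d ^ 4 = g)).card - 1)) = 28 := by
  have hpairs := hD.card_filter_mul_inv (orderOf · = 2) (by simp)
  have hcard : #D = 40 := hD.2.1
  constructor
  · rw [sum_card_fiberwise_eq_card_filter]
    simp only [mem_filter, mem_univ, true_and]
    have hsplit :=
      card_orderOf_pow_four_eq_three_add_card_orderOf_eq_two G216.pow_six_eq_one hreg.1
    omega
  · rw [sum_card_fiber_mul_sub_one]
    simp only [mem_filter, mem_univ, true_and]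
    have hsplit :=
      card_offDiag_pow_four_add_mul_eq_card_orderOf_mul_inv_eq_two G216.pow_six_eq_one hreg.1
    rw [hpairs, h2, G216.card_orderOf_eq_two] at hsplit
    omega
end
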